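/- arXiv:2311.01208 — 7 statements merged into one kernel-verified Lean document; each statement's English description precedes it below -/
import Mathlib

section
/- Let f : [0,1] → ℝ. (1) If f is increasing on [0,1] and is convex (or concave) on [0,1], then the sequence L_n(f) is increasing in n and the sequence R_n(f) is decreasing in n. (2) If f is decreasing on [0,1] and is convex (or concave) on [0,1], then L_n(f) is decreasing in n and R_n(f) is increasing in n. -/
open Finset

/-- Left Riemann sum of `f` over the uniform partition of `[0,1]` into `n` parts. -/
noncomputable def riemannL (f : ℝ → ℝ) (n : ℕ) : ℝ :=
  (1 / (n : ℝ)) * ∑ k ∈ Finset.range n, f ((k : ℝ) / (n : ℝ))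

/-- Right Riemann sum of `f` over the uniform partition of `[0,1]` into `n` parts. -/
noncomputable def riemannR (f : ℝ → ℝ) (n : ℕ) : ℝ :=
  (1 / (n : ℝ)) * ∑ k ∈ Finset.Icc 1 n, f ((k : ℝ) / (n : ℝ))

/-!
For increasing `f`, the inequality `L_n ≤ L_{n+1}` amounts to
`(n+1) ∑_{k<n} f(k/n) ≤ n ∑_{k≤n} f(k/(n+1))`. If `f` is convex, each node `k/n` lies between the
consecutive nodes `k/(n+1)` and `(k+1)/(n+1)` of the finer partition: convexity bounds `f(k/n)` by
the interpolation of its two neighbours, monotonicity adds `f(k/n) ≤ f((k+1)/(n+1))`, and the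
weights telescope. If `f` is concave, one interpolates instead each finer node `(k+1)/(n+1)` between
`k/n` and `(k+1)/n`. Decreasing `f` is handled through `-f`, and right sums through the reflection
`x ↦ 1 - x`, which turns `R_n f` into `L_n (f (1 - ·))`, swaps increasing and decreasing, and
preserves convexity and concavity.
-/

theorem ConvexOn.mul_map_le_of_mul_eq {s : Set ℝ} {f : ℝ → ℝ} (hf : ConvexOn ℝ s f)
    {x y z p q r : ℝ} (hx : x ∈ s) (hy : y ∈ s) (hp : 0 ≤ p) (hq : 0 ≤ q) (hr : 0 < r)
    (hpq : p + q = r) (hz : r * z = p * x + q * y) :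
    r * f z ≤ p * f x + q * f y := by
  have h := hf.2 hx hy (div_nonneg hp hr.le) (div_nonneg hq hr.le)
    (by rw [← add_div, hpq, div_self hr.ne'])
  have hz' : p / r * x + q / r * y = z := by
    field_simp
    linarith
  simp only [smul_eq_mul, hz'] at h
  calc r * f z ≤ r * (p / r * f x + q / r * f y) := mul_le_mul_of_nonneg_left h hr.le
    _ = p * f x + q * f y := by field_simp

theorem ConcaveOn.le_mul_map_of_mul_eq {s : Set ℝ} {f : ℝ → ℝ} (hf : ConcaveOn ℝ s f)
    {x y z p q r : ℝ} (hx : x ∈ s) (hy : y ∈ s) (hp : 0 ≤ p) (hq : 0 ≤ q) (hr : 0 < r)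
    (hpq : p + q = r) (hz : r * z = p * x + q * y) :
    p * f x + q * f y ≤ r * f z := by
  have := hf.neg.mul_map_le_of_mul_eq hx hy hp hq hr hpq hz
  simp only [Pi.neg_apply] at this
  linarith

section UnitInterval

variable {f : ℝ → ℝ}

theorem MonotoneOn.succ_mul_sum_le_of_convexOn (hm : MonotoneOn f (Set.Icc 0 1))
    (hf : ConvexOn ℝ (Set.Icc 0 1) f) (n : ℕ) :
    ((n : ℝ) + 1) * ∑ k ∈ range n, f (k / n) ≤ n * ∑ k ∈ range (n + 1), f (k / (n + 1)) := by
  set g : ℕ → ℝ := fun k => f (k / (n + 1))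
  set φ : ℕ → ℝ := fun k => k * g k
  have step : ∀ k ∈ range n, ((n : ℝ) + 1) * f (k / n) ≤ n * g k + (φ (k + 1) - φ k) := by
    intro k hk
    have hkn : (k : ℝ) < n := by exact_mod_cast mem_range.mp hk
    have hk0 : (0 : ℝ) ≤ k := k.cast_nonneg
    have hn : (n : ℝ) ≠ 0 := by linarith
    have hconv := hf.mul_map_le_of_mul_eq (x := k / (n + 1)) (y := (k + 1) / (n + 1))
      (z := k / n) (p := n - k) (q := k) (r := n)
      (unitInterval.div_mem hk0 (by linarith) (by linarith))
      (unitInterval.div_mem (by linarith) (by linarith) (by linarith)) (by linarith) hk0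
      (by linarith) (by ring) (by field_simp; ring)
    have hmono : f (k / n) ≤ f ((k + 1) / (n + 1)) :=
      hm (unitInterval.div_mem hk0 (by linarith) hkn.le)
        (unitInterval.div_mem (by linarith) (by linarith) (by linarith))
        (by rw [div_le_div_iff₀ (by linarith) (by linarith)]; linarith)
    simp only [g, φ]
    push_cast
    linarith
  calc ((n : ℝ) + 1) * ∑ k ∈ range n, f (k / n)
      ≤ ∑ k ∈ range n, (n * g k + (φ (k + 1) - φ k)) := by
        rw [mul_sum]; exact sum_le_sum step
    _ = n * ∑ k ∈ range (n + 1), g k := by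
        rw [sum_add_distrib, ← mul_sum, sum_range_sub, sum_range_succ]
        simp only [φ]
        push_cast
        ring

theorem MonotoneOn.succ_mul_sum_le_of_concaveOn (hm : MonotoneOn f (Set.Icc 0 1))
    (hf : ConcaveOn ℝ (Set.Icc 0 1) f) (n : ℕ) :
    ((n : ℝ) + 1) * ∑ k ∈ range n, f (k / n) ≤ n * ∑ k ∈ range (n + 1), f (k / (n + 1)) := by
  set h : ℕ → ℝ := fun k => f (k / n)
  set ψ : ℕ → ℝ := fun k => (n - k) * h k
  have step : ∀ k ∈ range n,
      ((n : ℝ) + 1) * h k + (ψ (k + 1) - ψ k) ≤ n * f ((k + 1) / (n + 1)) := by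
    intro k hk
    have hkn : (k : ℝ) + 1 ≤ n := by exact_mod_cast mem_range.mp hk
    have hk0 : (0 : ℝ) ≤ k := k.cast_nonneg
    have hn : (n : ℝ) ≠ 0 := by linarith
    have hconc := hf.le_mul_map_of_mul_eq (x := k / n) (y := (k + 1) / n)
      (z := (k + 1) / (n + 1)) (p := k + 1) (q := n - k) (r := n + 1)
      (unitInterval.div_mem hk0 (by linarith) (by linarith))
      (unitInterval.div_mem (by linarith) (by linarith) hkn) (by linarith) (by linarith)
      (by linarith) (by ring) (by field_simp; ring)
    have hmono : f ((k + 1) / (n + 1)) ≤ f ((k + 1) / n) :=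
      hm (unitInterval.div_mem (by linarith) (by linarith) (by linarith))
        (unitInterval.div_mem (by linarith) (by linarith) hkn)
        (div_le_div_of_nonneg_left (by linarith) (by linarith) (by linarith))
    simp only [h, ψ]
    push_cast
    linarith
  calc ((n : ℝ) + 1) * ∑ k ∈ range n, h k
      = ∑ k ∈ range n, (((n : ℝ) + 1) * h k + (ψ (k + 1) - ψ k)) + n * f 0 := by
        rw [sum_add_distrib, sum_range_sub, mul_sum]
        simp [ψ, h]
    _ ≤ ∑ k ∈ range n, n * f ((k + 1) / (n + 1)) + n * f 0 := by
        gcongr with k hk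
        exact step k hk
    _ = n * ∑ k ∈ range (n + 1), f (k / (n + 1)) := by
        rw [sum_range_succ', mul_add, mul_sum]
        push_cast
        simp

theorem riemannL_le_riemannL_succ (hf : ConvexOn ℝ (Set.Icc 0 1) f ∨ ConcaveOn ℝ (Set.Icc 0 1) f)
    (hm : MonotoneOn f (Set.Icc 0 1)) {n : ℕ} (hn : 1 ≤ n) :
    riemannL f n ≤ riemannL f (n + 1) := by
  have hsum := hf.elim hm.succ_mul_sum_le_of_convexOn hm.succ_mul_sum_le_of_concaveOn n
  have hn0 : (0 : ℝ) < n := by exact_mod_cast hn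
  unfold riemannL
  push_cast
  rw [one_div_mul_eq_div, one_div_mul_eq_div, div_le_div_iff₀ hn0 (by linarith)]
  linarith

theorem riemannL_succ_le_riemannL
    (hf : ConvexOn ℝ (Set.Icc 0 1) f ∨ ConcaveOn ℝ (Set.Icc 0 1) f)
    (ha : AntitoneOn f (Set.Icc 0 1)) {n : ℕ} (hn : 1 ≤ n) :
    riemannL f (n + 1) ≤ riemannL f n := by
  have h := riemannL_le_riemannL_succ (f := -f) (hf.symm.imp ConcaveOn.neg ConvexOn.neg) ha.neg hn
  simpa [riemannL, sum_neg_distrib] using h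

theorem ConvexOn.comp_one_sub (hf : ConvexOn ℝ (Set.Icc 0 1) f) :
    ConvexOn ℝ (Set.Icc 0 1) (fun x => f (1 - x)) := by
  have hg : ⇑(AffineMap.lineMap (1 : ℝ) (0 : ℝ) : ℝ →ᵃ[ℝ] ℝ) = fun x => 1 - x := by
    ext x; rw [AffineMap.lineMap_apply_ring']; ring
  have hs : (fun x : ℝ => 1 - x) ⁻¹' Set.Icc 0 1 = Set.Icc 0 1 := by
    ext x
    exact Set.Icc.mem_iff_one_sub_mem.symm
  have := hf.comp_affineMap (AffineMap.lineMap (1 : ℝ) (0 : ℝ))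
  rwa [hg, hs] at this

theorem ConcaveOn.comp_one_sub (hf : ConcaveOn ℝ (Set.Icc 0 1) f) :
    ConcaveOn ℝ (Set.Icc 0 1) (fun x => f (1 - x)) := by
  have h := hf.neg.comp_one_sub.neg
  rwa [show (-fun x => (-f) (1 - x)) = fun x => f (1 - x) by ext; simp] at h

theorem MonotoneOn.comp_one_sub (hm : MonotoneOn f (Set.Icc 0 1)) :
    AntitoneOn (fun x => f (1 - x)) (Set.Icc 0 1) :=
  fun x hx y hy hxy => hm (Set.Icc.mem_iff_one_sub_mem.mp hy) (Set.Icc.mem_iff_one_sub_mem.mp hx)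
    (by linarith)

theorem AntitoneOn.comp_one_sub (ha : AntitoneOn f (Set.Icc 0 1)) :
    MonotoneOn (fun x => f (1 - x)) (Set.Icc 0 1) := by
  simpa using ha.neg.comp_one_sub.neg

end UnitInterval

theorem riemannR_eq_riemannL_one_sub (f : ℝ → ℝ) (n : ℕ) :
    riemannR f n = riemannL (fun x => f (1 - x)) n := by
  unfold riemannR riemannL
  congr 1
  refine sum_nbij' (fun i => n - i) (fun j => n - j) ?_ ?_ ?_ ?_ ?_
  · intro i hi; simp only [mem_Icc, mem_range] at hi ⊢; omega
  · intro j hj; simp only [mem_Icc, mem_range] at hj ⊢; omega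
  · intro i hi; simp only [mem_Icc] at hi; omega
  · intro j hj; simp only [mem_range] at hj; omega
  · intro i hi
    simp only [mem_Icc] at hi
    have hn : (n : ℝ) ≠ 0 := by exact_mod_cast (by omega : n ≠ 0)
    rw [Nat.cast_sub hi.2, sub_div, div_self hn]
    simp only [sub_sub_cancel]

theorem stmt0 (f : ℝ → ℝ)
    (hconv : ConvexOn ℝ (Set.Icc (0:ℝ) 1) f ∨ ConcaveOn ℝ (Set.Icc (0:ℝ) 1) f) :
    (MonotoneOn f (Set.Icc (0:ℝ) 1) →
      (∀ n : ℕ, 1 ≤ n → riemannL f n ≤ riemannL f (n + 1)) ∧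
      (∀ n : ℕ, 1 ≤ n → riemannR f (n + 1) ≤ riemannR f n)) ∧
    (AntitoneOn f (Set.Icc (0:ℝ) 1) →
      (∀ n : ℕ, 1 ≤ n → riemannL f (n + 1) ≤ riemannL f n) ∧
      (∀ n : ℕ, 1 ≤ n → riemannR f n ≤ riemannR f (n + 1))) := by
  have hconv' := hconv.imp ConvexOn.comp_one_sub ConcaveOn.comp_one_sub
  simp only [riemannR_eq_riemannL_one_sub]
  exact ⟨fun hm => ⟨fun _ => riemannL_le_riemannL_succ hconv hm,
      fun _ => riemannL_succ_le_riemannL hconv' hm.comp_one_sub⟩,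
    fun ha => ⟨fun _ => riemannL_succ_le_riemannL hconv ha,
      fun _ => riemannL_le_riemannL_succ hconv' ha.comp_one_sub⟩⟩
end

section
/- Let f : [0,1] → ℝ be an increasing function and let φ : (0,∞) → ℝ be a positive increasing function. Set a_0 := 0, a_k := φ(k) for integers k ≥ 1, A_k := 1 − a_k/a_{k+1} and B_k := a_{k+1}/a_k − 1 for k ≥ 1. (1) If f is convex on [0,1] and the sequence (k·A_k)_{k≥1} is increasing, or if f is concave on [0,1] and the sequence (k·B_k)_{k≥1} is increasing, then the sequence n ↦ (1/n) ∑_{k=1}^{n} f(a_k/a_n) is decreasing in n. (2) If f is convex on [0,1] and (k·B_k)_{k≥1} is decreasing, or if f is concave on [0,1] and (k·A_k)_{k≥1} is decreasing, then the sequence n ↦ (1/n) ∑_{k=0}^{n-1} f(a_k/a_n) is increasing in n. -/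
/-!
Both monotonicity statements come from a termwise Jensen inequality between consecutive
levels. For instance, in the convex case of (1), the point `a_{i+1}/a_{n+1}` lies below the
combination `((n-i) a_{i+1} + i a_i) / (n a_n)` of two sample points of level `n`; monotonicity
and convexity of `f` then give `n f(a_{i+1}/a_{n+1}) ≤ (n-i) f(a_{i+1}/a_n) + i f(a_i/a_n)`, and
summing over `i` the weights add up to `n + 1` on every sample point of level `n`. Whether the
point lies on the right side of the combination is exactly a comparison of `i A_i` with `n A_n`
(of `k B_k` with `n B_n` in the other cases), by the identities `weighted_ratios_sub_eq_*`.
-/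

open Finset

theorem ConvexOn.mul_le_add_mul_of_monotoneOn {s : Set ℝ} {f : ℝ → ℝ}
    (hconv : ConvexOn ℝ s f) (hmono : MonotoneOn f s) {x y z p q c : ℝ}
    (hx : x ∈ s) (hy : y ∈ s) (hz : z ∈ s) (hp : 0 ≤ p) (hq : 0 ≤ q) (hpq : p + q = c)
    (hzxy : c * z ≤ p * x + q * y) :
    c * f z ≤ p * f x + q * f y := by
  subst hpq
  rcases (add_nonneg hp hq).eq_or_lt with hpq | hpq
  · obtain ⟨rfl, rfl⟩ := (add_eq_zero_iff_of_nonneg hp hq).1 hpq.symm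
    simp
  have hw : p / (p + q) + q / (p + q) = 1 := by field_simp
  have hmem : p / (p + q) * x + q / (p + q) * y ∈ s :=
    hconv.1 hx hy (by positivity) (by positivity) hw
  have hzle : z ≤ p / (p + q) * x + q / (p + q) * y := by
    rw [div_mul_eq_mul_div, div_mul_eq_mul_div, ← add_div, le_div_iff₀ hpq]
    linarith
  calc (p + q) * f z ≤ (p + q) * f (p / (p + q) * x + q / (p + q) * y) := by
        gcongr; exact hmono hz hmem hzle
    _ ≤ (p + q) * (p / (p + q) * f x + q / (p + q) * f y) := by
        gcongr; exact hconv.2 hx hy (by positivity) (by positivity) hw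
    _ = p * f x + q * f y := by field_simp

theorem ConcaveOn.add_mul_le_mul_of_monotoneOn {s : Set ℝ} {f : ℝ → ℝ}
    (hconc : ConcaveOn ℝ s f) (hmono : MonotoneOn f s) {x y z p q c : ℝ}
    (hx : x ∈ s) (hy : y ∈ s) (hz : z ∈ s) (hp : 0 ≤ p) (hq : 0 ≤ q) (hpq : p + q = c)
    (hzxy : p * x + q * y ≤ c * z) :
    p * f x + q * f y ≤ c * f z := by
  subst hpq
  rcases (add_nonneg hp hq).eq_or_lt with hpq | hpq
  · obtain ⟨rfl, rfl⟩ := (add_eq_zero_iff_of_nonneg hp hq).1 hpq.symm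
    simp
  have hw : p / (p + q) + q / (p + q) = 1 := by field_simp
  have hmem : p / (p + q) * x + q / (p + q) * y ∈ s :=
    hconc.1 hx hy (by positivity) (by positivity) hw
  have hzle : p / (p + q) * x + q / (p + q) * y ≤ z := by
    rw [div_mul_eq_mul_div, div_mul_eq_mul_div, ← add_div, div_le_iff₀ hpq]
    linarith
  calc p * f x + q * f y = (p + q) * (p / (p + q) * f x + q / (p + q) * f y) := by field_simp
    _ ≤ (p + q) * f (p / (p + q) * x + q / (p + q) * y) := by
        gcongr; exact hconc.2 hx hy (by positivity) (by positivity) hw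
    _ ≤ (p + q) * f z := by
        gcongr; exact hmono hmem hz hzle

theorem sum_range_sub_mul_add_mul_succ (H : ℕ → ℝ) (n : ℕ) :
    ∑ i ∈ range n, ((n - i : ℝ) * H i + (i + 1) * H (i + 1)) =
      n * ∑ i ∈ range (n + 1), H i := by
  have h1 : ∑ i ∈ range n, (i + 1 : ℝ) * H (i + 1) =
      ∑ i ∈ range (n + 1), (i : ℝ) * H i := by
    simp [sum_range_succ']
  have h2 : ∑ i ∈ range n, (n - i : ℝ) * H i =
      ∑ i ∈ range (n + 1), (n - i : ℝ) * H i := by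
    simp [sum_range_succ]
  rw [sum_add_distrib, h1, h2, ← sum_add_distrib, mul_sum]
  exact sum_congr rfl fun i _ => by ring

theorem sum_range_sub_mul_succ_add_mul (G : ℕ → ℝ) (n : ℕ) :
    ∑ i ∈ range (n + 1), ((n - i : ℝ) * G (i + 1) + i * G i) =
      (n + 1) * ∑ i ∈ range n, G (i + 1) := by
  have h1 : ∑ i ∈ range (n + 1), (i : ℝ) * G i =
      ∑ i ∈ range n, (i + 1 : ℝ) * G (i + 1) := by
    simp [sum_range_succ']
  have h2 : ∑ i ∈ range (n + 1), (n - i : ℝ) * G (i + 1) =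
      ∑ i ∈ range n, (n - i : ℝ) * G (i + 1) := by
    simp [sum_range_succ]
  rw [sum_add_distrib, h1, h2, ← sum_add_distrib, mul_sum]
  exact sum_congr rfl fun i _ => by ring

theorem sum_Icc_one_eq_sum_range (g : ℕ → ℝ) (n : ℕ) :
    ∑ k ∈ Icc 1 n, g k = ∑ i ∈ range n, g (i + 1) := by
  rw [← Ico_add_one_right_eq_Icc, sum_Ico_eq_sum_range]
  simp [add_comm]

theorem one_div_mul_le_one_div_mul {p q x y : ℝ} (hp : 0 < p) (hq : 0 < q) (h : q * x ≤ p * y) :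
    1 / p * x ≤ 1 / q * y := by
  rw [one_div_mul_eq_div, one_div_mul_eq_div, div_le_div_iff₀ hp hq]
  linarith

theorem weighted_ratios_sub_eq_mul_one_sub_div {u u' v v' c s : ℝ} (hu' : u' ≠ 0) (hv : v ≠ 0)
    (hv' : v' ≠ 0) :
    (c - s) * (u' / v) + s * (u / v) - c * (u' / v') =
      u' / v * (c * (1 - v / v') - s * (1 - u / u')) := by
  field_simp
  ring

theorem weighted_ratios_sub_eq_mul_div_sub_one {u u' v v' c s : ℝ} (hu : u ≠ 0) (hv : v ≠ 0)
    (hv' : v' ≠ 0) :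
    (c - s) * (u / v') + s * (u' / v') - c * (u / v) =
      u / v' * (s * (u' / u - 1) - c * (v' / v - 1)) := by
  field_simp
  ring

section

noncomputable def rightMean (f : ℝ → ℝ) (a : ℕ → ℝ) (n : ℕ) : ℝ :=
  1 / n * ∑ k ∈ Icc 1 n, f (a k / a n)

noncomputable def leftMean (f : ℝ → ℝ) (a : ℕ → ℝ) (n : ℕ) : ℝ :=
  1 / n * ∑ k ∈ range n, f (a k / a n)

variable {f : ℝ → ℝ} {a : ℕ → ℝ} {n : ℕ}

theorem div_mem_Icc_of_monotone (ha : Monotone a) (ha0 : a 0 = 0) (ha1 : 0 < a 1) {k : ℕ}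
    (hn : 1 ≤ n) (hkn : k ≤ n) : a k / a n ∈ Set.Icc (0 : ℝ) 1 :=
  ⟨div_nonneg (ha0 ▸ ha k.zero_le) (ha1.trans_le (ha hn)).le,
    div_le_one_of_le₀ (ha hkn) (ha1.trans_le (ha hn)).le⟩

theorem rightMean_succ_le_of_convexOn (hconv : ConvexOn ℝ (Set.Icc 0 1) f)
    (hf : MonotoneOn f (Set.Icc 0 1)) (ha : Monotone a) (ha0 : a 0 = 0) (ha1 : 0 < a 1)
    (hn : 1 ≤ n)
    (hA : ∀ k, 1 ≤ k → k ≤ n →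
      (k : ℝ) * (1 - a k / a (k + 1)) ≤ n * (1 - a n / a (n + 1))) :
    rightMean f a (n + 1) ≤ rightMean f a n := by
  have hpos : ∀ k, 1 ≤ k → 0 < a k := fun k hk => ha1.trans_le (ha hk)
  have termwise : ∀ i ∈ range (n + 1), (n : ℝ) * f (a (i + 1) / a (n + 1)) ≤
      (n - i) * f (a (i + 1) / a n) + i * f (a i / a n) := by
    intro i hi
    have hin : i ≤ n := Nat.lt_succ_iff.1 (mem_range.1 hi)
    rcases hin.eq_or_lt with rfl | hin
    · rw [div_self (hpos _ le_add_self).ne', div_self (hpos _ hn).ne', sub_self, zero_mul,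
        zero_add]
    have hcond : (i : ℝ) * (1 - a i / a (i + 1)) ≤ n * (1 - a n / a (n + 1)) := by
      rcases i.eq_zero_or_pos with rfl | hi0
      · have : a n / a (n + 1) ≤ 1 := div_le_one_of_le₀ (ha n.le_succ) (hpos _ le_add_self).le
        simp only [Nat.cast_zero, zero_mul]
        exact mul_nonneg n.cast_nonneg (by linarith)
      · exact hA i hi0 hin.le
    refine hconv.mul_le_add_mul_of_monotoneOn hf (div_mem_Icc_of_monotone ha ha0 ha1 hn hin)
      (div_mem_Icc_of_monotone ha ha0 ha1 hn hin.le)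
      (div_mem_Icc_of_monotone ha ha0 ha1 le_add_self (by omega))
      (sub_nonneg.2 (by exact_mod_cast hin.le)) i.cast_nonneg (sub_add_cancel _ _) ?_
    have key := weighted_ratios_sub_eq_mul_one_sub_div (u := a i) (c := (n : ℝ)) (s := (i : ℝ))
      (hpos (i + 1) le_add_self).ne' (hpos n hn).ne' (hpos (n + 1) le_add_self).ne'
    have : 0 ≤ a (i + 1) / a n := (div_mem_Icc_of_monotone ha ha0 ha1 hn hin).1
    linarith [mul_nonneg this (sub_nonneg.2 hcond)]
  unfold rightMean
  rw [sum_Icc_one_eq_sum_range, sum_Icc_one_eq_sum_range]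
  push_cast
  refine one_div_mul_le_one_div_mul (by positivity) (by exact_mod_cast hn) ?_
  calc (n : ℝ) * ∑ i ∈ range (n + 1), f (a (i + 1) / a (n + 1))
      ≤ ∑ i ∈ range (n + 1), ((n - i : ℝ) * f (a (i + 1) / a n) + i * f (a i / a n)) := by
        rw [mul_sum]; exact sum_le_sum termwise
    _ = (n + 1) * ∑ i ∈ range n, f (a (i + 1) / a n) :=
        sum_range_sub_mul_succ_add_mul (fun k => f (a k / a n)) n

theorem rightMean_succ_le_of_concaveOn (hconc : ConcaveOn ℝ (Set.Icc 0 1) f)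
    (hf : MonotoneOn f (Set.Icc 0 1)) (ha : Monotone a) (ha0 : a 0 = 0) (ha1 : 0 < a 1)
    (hn : 1 ≤ n)
    (hB : ∀ k, 1 ≤ k → k ≤ n →
      (k : ℝ) * (a (k + 1) / a k - 1) ≤ n * (a (n + 1) / a n - 1)) :
    rightMean f a (n + 1) ≤ rightMean f a n := by
  have hpos : ∀ k, 1 ≤ k → 0 < a k := fun k hk => ha1.trans_le (ha hk)
  have termwise : ∀ i ∈ range n, (n - i : ℝ) * f (a (i + 1) / a (n + 1)) +
      (i + 1) * f (a (i + 2) / a (n + 1)) ≤ (n + 1) * f (a (i + 1) / a n) := by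
    intro i hi
    have hin : i < n := mem_range.1 hi
    have hBn : 0 ≤ a (n + 1) / a n - 1 :=
      sub_nonneg.2 ((one_le_div (hpos n hn)).2 (ha n.le_succ))
    have hcond :
        (i + 1 : ℝ) * (a (i + 2) / a (i + 1) - 1) ≤ (n + 1) * (a (n + 1) / a n - 1) := by
      have := hB (i + 1) le_add_self hin
      push_cast at this
      linarith
    refine hconc.add_mul_le_mul_of_monotoneOn hf
      (div_mem_Icc_of_monotone ha ha0 ha1 le_add_self (by omega))
      (div_mem_Icc_of_monotone ha ha0 ha1 le_add_self (by omega))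
      (div_mem_Icc_of_monotone ha ha0 ha1 hn hin)
      (sub_nonneg.2 (by exact_mod_cast hin.le)) (by positivity) (by ring) ?_
    have key := weighted_ratios_sub_eq_mul_div_sub_one (u' := a (i + 2)) (c := (n + 1 : ℝ))
      (s := (i + 1 : ℝ)) (hpos (i + 1) le_add_self).ne' (hpos n hn).ne'
      (hpos (n + 1) le_add_self).ne'
    have : 0 ≤ a (i + 1) / a (n + 1) :=
      (div_mem_Icc_of_monotone ha ha0 ha1 le_add_self (by omega)).1
    linarith [mul_nonneg this (sub_nonneg.2 hcond)]
  unfold rightMean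
  rw [sum_Icc_one_eq_sum_range, sum_Icc_one_eq_sum_range]
  push_cast
  refine one_div_mul_le_one_div_mul (by positivity) (by exact_mod_cast hn) ?_
  calc (n : ℝ) * ∑ i ∈ range (n + 1), f (a (i + 1) / a (n + 1))
      = ∑ i ∈ range n, ((n - i : ℝ) * f (a (i + 1) / a (n + 1)) +
          (i + 1) * f (a (i + 2) / a (n + 1))) :=
        (sum_range_sub_mul_add_mul_succ (fun k => f (a (k + 1) / a (n + 1))) n).symm
    _ ≤ ∑ i ∈ range n, (n + 1 : ℝ) * f (a (i + 1) / a n) := sum_le_sum termwise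
    _ = (n + 1) * ∑ i ∈ range n, f (a (i + 1) / a n) := (mul_sum _ _ _).symm

theorem leftMean_le_succ_of_convexOn (hconv : ConvexOn ℝ (Set.Icc 0 1) f)
    (hf : MonotoneOn f (Set.Icc 0 1)) (ha : Monotone a) (ha0 : a 0 = 0) (ha1 : 0 < a 1)
    (hn : 1 ≤ n)
    (hB : ∀ k, 1 ≤ k → k ≤ n →
      (n : ℝ) * (a (n + 1) / a n - 1) ≤ k * (a (k + 1) / a k - 1)) :
    leftMean f a n ≤ leftMean f a (n + 1) := by
  have hpos : ∀ k, 1 ≤ k → 0 < a k := fun k hk => ha1.trans_le (ha hk)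
  have termwise : ∀ k ∈ range n, (n + 1 : ℝ) * f (a k / a n) ≤
      (n - k) * f (a k / a (n + 1)) + (k + 1) * f (a (k + 1) / a (n + 1)) := by
    intro k hk
    have hkn : k < n := mem_range.1 hk
    refine hconv.mul_le_add_mul_of_monotoneOn hf
      (div_mem_Icc_of_monotone ha ha0 ha1 le_add_self (by omega))
      (div_mem_Icc_of_monotone ha ha0 ha1 le_add_self (by omega))
      (div_mem_Icc_of_monotone ha ha0 ha1 hn hkn.le)
      (sub_nonneg.2 (by exact_mod_cast hkn.le)) (by positivity) (by ring) ?_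
    rcases k.eq_zero_or_pos with rfl | hk0
    · simp only [ha0, zero_div, mul_zero, Nat.cast_zero, zero_add, one_mul]
      exact (div_mem_Icc_of_monotone ha ha0 ha1 le_add_self (by omega)).1
    have hBk : 0 ≤ a (k + 1) / a k - 1 :=
      sub_nonneg.2 ((one_le_div (hpos k hk0)).2 (ha k.le_succ))
    have hcond : (n + 1 : ℝ) * (a (n + 1) / a n - 1) ≤ (k + 1) * (a (k + 1) / a k - 1) := by
      have := hB k hk0 hkn.le
      have hkn' : (k : ℝ) ≤ n := by exact_mod_cast hkn.le
      have hk' : (1 : ℝ) ≤ k := by exact_mod_cast hk0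
      nlinarith
    have key := weighted_ratios_sub_eq_mul_div_sub_one (u' := a (k + 1)) (c := (n + 1 : ℝ))
      (s := (k + 1 : ℝ)) (hpos k hk0).ne' (hpos n hn).ne' (hpos (n + 1) le_add_self).ne'
    have : 0 ≤ a k / a (n + 1) := (div_mem_Icc_of_monotone ha ha0 ha1 le_add_self (by omega)).1
    linarith [mul_nonneg this (sub_nonneg.2 hcond)]
  unfold leftMean
  push_cast
  refine one_div_mul_le_one_div_mul (by exact_mod_cast hn) (by positivity) ?_
  calc (n + 1 : ℝ) * ∑ k ∈ range n, f (a k / a n)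
      = ∑ k ∈ range n, (n + 1 : ℝ) * f (a k / a n) := mul_sum _ _ _
    _ ≤ ∑ k ∈ range n, ((n - k : ℝ) * f (a k / a (n + 1)) +
          (k + 1) * f (a (k + 1) / a (n + 1))) := sum_le_sum termwise
    _ = n * ∑ k ∈ range (n + 1), f (a k / a (n + 1)) :=
        sum_range_sub_mul_add_mul_succ (fun k => f (a k / a (n + 1))) n

theorem leftMean_le_succ_of_concaveOn (hconc : ConcaveOn ℝ (Set.Icc 0 1) f)
    (hf : MonotoneOn f (Set.Icc 0 1)) (ha : Monotone a) (ha0 : a 0 = 0) (ha1 : 0 < a 1)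
    (hn : 1 ≤ n)
    (hA : ∀ k, 1 ≤ k → k ≤ n →
      (n : ℝ) * (1 - a n / a (n + 1)) ≤ k * (1 - a k / a (k + 1))) :
    leftMean f a n ≤ leftMean f a (n + 1) := by
  have hpos : ∀ k, 1 ≤ k → 0 < a k := fun k hk => ha1.trans_le (ha hk)
  have termwise : ∀ i ∈ range (n + 1),
      (n - i : ℝ) * f (a i / a n) + i * f (a (i - 1) / a n) ≤ n * f (a i / a (n + 1)) := by
    intro i hi
    rcases i with _ | m
    · simp [ha0]
    have hmn : m < n := by simpa using hi
    simp only [Nat.add_sub_cancel]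
    push_cast
    refine hconc.add_mul_le_mul_of_monotoneOn hf
      (div_mem_Icc_of_monotone ha ha0 ha1 hn hmn) (div_mem_Icc_of_monotone ha ha0 ha1 hn hmn.le)
      (div_mem_Icc_of_monotone ha ha0 ha1 le_add_self (by omega))
      (sub_nonneg.2 (by exact_mod_cast hmn)) (by positivity) (sub_add_cancel _ _) ?_
    have hcond : (n : ℝ) * (1 - a n / a (n + 1)) ≤ (m + 1) * (1 - a m / a (m + 1)) := by
      have hAm : a m / a (m + 1) ≤ 1 := div_le_one_of_le₀ (ha m.le_succ) (hpos _ le_add_self).le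
      rcases m.eq_zero_or_pos with rfl | hm0
      · have hA1 := hA 1 le_rfl hn
        have : 0 ≤ a 1 / a 2 := div_nonneg (hpos 1 le_rfl).le (hpos 2 (by norm_num)).le
        rw [ha0, zero_div]
        push_cast at hA1 ⊢
        linarith
      · have := hA m hm0 hmn.le
        linarith
    have key := weighted_ratios_sub_eq_mul_one_sub_div (u := a m) (c := (n : ℝ))
      (s := (m + 1 : ℝ)) (hpos (m + 1) le_add_self).ne' (hpos n hn).ne'
      (hpos (n + 1) le_add_self).ne'
    have : 0 ≤ a (m + 1) / a n := (div_mem_Icc_of_monotone ha ha0 ha1 hn hmn).1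
    linarith [mul_nonneg this (sub_nonneg.2 hcond)]
  unfold leftMean
  push_cast
  refine one_div_mul_le_one_div_mul (by exact_mod_cast hn) (by positivity) ?_
  calc (n + 1 : ℝ) * ∑ i ∈ range n, f (a i / a n)
      = ∑ i ∈ range (n + 1), ((n - i : ℝ) * f (a i / a n) + i * f (a (i - 1) / a n)) := by
        simpa using (sum_range_sub_mul_succ_add_mul (fun k => f (a (k - 1) / a n)) n).symm
    _ ≤ ∑ i ∈ range (n + 1), (n : ℝ) * f (a i / a (n + 1)) := sum_le_sum termwise
    _ = n * ∑ i ∈ range (n + 1), f (a i / a (n + 1)) := (mul_sum _ _ _).symm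

end

theorem natCast_mul_le_of_le_succ {u : ℕ → ℝ}
    (h : ∀ k : ℕ, 1 ≤ k → (k : ℝ) * u k ≤ ((k : ℝ) + 1) * u (k + 1)) {k n : ℕ}
    (hk : 1 ≤ k) (hkn : k ≤ n) :
    (k : ℝ) * u k ≤ n * u n :=
  monotoneOn_nat_Ici_of_le_succ (f := fun k : ℕ => (k : ℝ) * u k)
    (fun k hk => by push_cast; exact h k hk) hk (hk.trans hkn) hkn

theorem natCast_mul_le_of_succ_le {u : ℕ → ℝ}
    (h : ∀ k : ℕ, 1 ≤ k → ((k : ℝ) + 1) * u (k + 1) ≤ k * u k) {k n : ℕ}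
    (hk : 1 ≤ k) (hkn : k ≤ n) :
    (n : ℝ) * u n ≤ k * u k :=
  antitoneOn_nat_Ici_of_succ_le (f := fun k : ℕ => (k : ℝ) * u k)
    (fun k hk => by push_cast; exact h k hk) hk (hk.trans hkn) hkn

theorem stmt2 (f φ : ℝ → ℝ) (a A B : ℕ → ℝ)
    (hf : MonotoneOn f (Set.Icc (0:ℝ) 1))
    (hφpos : ∀ x : ℝ, 0 < x → 0 < φ x)
    (hφmono : MonotoneOn φ (Set.Ioi (0:ℝ)))
    (ha0 : a 0 = 0)
    (hak : ∀ k : ℕ, 1 ≤ k → a k = φ (k : ℝ))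
    (hA : ∀ k : ℕ, 1 ≤ k → A k = 1 - a k / a (k + 1))
    (hB : ∀ k : ℕ, 1 ≤ k → B k = a (k + 1) / a k - 1) :
    (((ConvexOn ℝ (Set.Icc (0:ℝ) 1) f ∧
        ∀ k : ℕ, 1 ≤ k → (k : ℝ) * A k ≤ ((k : ℝ) + 1) * A (k + 1)) ∨
      (ConcaveOn ℝ (Set.Icc (0:ℝ) 1) f ∧
        ∀ k : ℕ, 1 ≤ k → (k : ℝ) * B k ≤ ((k : ℝ) + 1) * B (k + 1))) →
      ∀ n : ℕ, 1 ≤ n →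
        (1 / ((n : ℝ) + 1)) * ∑ k ∈ Finset.Icc 1 (n + 1), f (a k / a (n + 1)) ≤
        (1 / (n : ℝ)) * ∑ k ∈ Finset.Icc 1 n, f (a k / a n)) ∧
    (((ConvexOn ℝ (Set.Icc (0:ℝ) 1) f ∧
        ∀ k : ℕ, 1 ≤ k → ((k : ℝ) + 1) * B (k + 1) ≤ (k : ℝ) * B k) ∨
      (ConcaveOn ℝ (Set.Icc (0:ℝ) 1) f ∧
        ∀ k : ℕ, 1 ≤ k → ((k : ℝ) + 1) * A (k + 1) ≤ (k : ℝ) * A k)) →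
      ∀ n : ℕ, 1 ≤ n →
        (1 / (n : ℝ)) * ∑ k ∈ Finset.range n, f (a k / a n) ≤
        (1 / ((n : ℝ) + 1)) * ∑ k ∈ Finset.range (n + 1), f (a k / a (n + 1))) := by
  have hpos : ∀ k, 1 ≤ k → 0 < a k := fun k hk => hak k hk ▸ hφpos _ (by exact_mod_cast hk)
  have ha : Monotone a := monotone_nat_of_le_succ fun k => by
    rcases k.eq_zero_or_pos with rfl | hk
    · exact ha0 ▸ (hpos 1 le_rfl).le
    · rw [hak k hk, hak (k + 1) (by omega)]
      exact hφmono (Set.mem_Ioi.2 (by exact_mod_cast hk)) (Set.mem_Ioi.2 (by positivity))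
        (by push_cast; linarith)
  have ha1 := hpos 1 le_rfl
  refine ⟨?_, ?_⟩ <;> rintro (⟨hconv, hcnd⟩ | ⟨hconc, hcnd⟩) n hn
  · simpa only [rightMean, Nat.cast_succ] using
      rightMean_succ_le_of_convexOn hconv hf ha ha0 ha1 hn fun k hk hkn => by
        simpa only [hA k hk, hA n (hk.trans hkn)] using natCast_mul_le_of_le_succ hcnd hk hkn
  · simpa only [rightMean, Nat.cast_succ] using
      rightMean_succ_le_of_concaveOn hconc hf ha ha0 ha1 hn fun k hk hkn => by
        simpa only [hB k hk, hB n (hk.trans hkn)] using natCast_mul_le_of_le_succ hcnd hk hkn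
  · simpa only [leftMean, Nat.cast_succ] using
      leftMean_le_succ_of_convexOn hconv hf ha ha0 ha1 hn fun k hk hkn => by
        simpa only [hB k hk, hB n (hk.trans hkn)] using natCast_mul_le_of_succ_le hcnd hk hkn
  · simpa only [leftMean, Nat.cast_succ] using
      leftMean_le_succ_of_concaveOn hconc hf ha ha0 ha1 hn fun k hk hkn => by
        simpa only [hA k hk, hA n (hk.trans hkn)] using natCast_mul_le_of_succ_le hcnd hk hkn
end

section
/- Let f : [0,1] → ℝ. Define the central Riemann sum C_n(f) := (1/(n−1)) ∑_{k=1}^{n-1} f(k/n) for n ≥ 2, and the bilateral Riemann sum B_n(f) := (1/(n+1)) ∑_{k=0}^{n} f(k/n) for n ≥ 1. (1) If f is convex on [0,1], then C_n(f) is increasing in n and B_n(f) is decreasing in n. (2) If f is concave on [0,1], then C_n(f) is decreasing in n and B_n(f) is increasing in n. -/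
/-!
The node `k / n` is the convex combination
`((n - k) / n) • (k / (n + 1)) + (k / n) • ((k + 1) / (n + 1))` of its neighbours in the grid of
mesh `1 / (n + 1)`, and the node `k / (n + 1)` is the convex combination
`(k / (n + 1)) • ((k - 1) / n) + ((n + 1 - k) / (n + 1)) • (k / n)` of its neighbours in the
grid of mesh `1 / n`. Applying convexity at every node and summing, every node of the other grid
collects the same total weight, `(n - 1) / n` in the first case and `(n + 2) / (n + 1)` in the
second; this gives `n ∑_{k=1}^{n-1} f (k/n) ≤ (n - 1) ∑_{k=1}^{n} f (k/(n+1))` and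
`(n + 1) ∑_{k=0}^{n+1} f (k/(n+1)) ≤ (n + 2) ∑_{k=0}^{n} f (k/n)`. The concave case follows by
applying this to `-f`.
-/

open Finset

/-- Central Riemann sum `C_n(f) = (1/(n-1)) ∑_{k=1}^{n-1} f (k/n)`. -/
noncomputable def riemannC (f : ℝ → ℝ) (n : ℕ) : ℝ :=
  (1 / ((n : ℝ) - 1)) * ∑ k ∈ Finset.Ico 1 n, f ((k : ℝ) / (n : ℝ))

/-- Bilateral Riemann sum `B_n(f) = (1/(n+1)) ∑_{k=0}^{n} f (k/n)`. -/
noncomputable def riemannB (f : ℝ → ℝ) (n : ℕ) : ℝ :=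
  (1 / ((n : ℝ) + 1)) * ∑ k ∈ Finset.range (n + 1), f ((k : ℝ) / (n : ℝ))

lemma natCast_div_mem_Icc {k n : ℕ} (h : k ≤ n) : (k / n : ℝ) ∈ Set.Icc 0 1 :=
  ⟨by positivity, div_le_one_of_le₀ (by exact_mod_cast h) n.cast_nonneg⟩

lemma ConvexOn.add_mul_apply_div_le {s : Set ℝ} {f : ℝ → ℝ} (hf : ConvexOn ℝ s f)
    {x y a b : ℝ} (hx : x ∈ s) (hy : y ∈ s) (ha : 0 ≤ a) (hb : 0 ≤ b) (hab : 0 < a + b) :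
    (a + b) * f ((a * x + b * y) / (a + b)) ≤ a * f x + b * f y := by
  have h := (convexOn_iff_div.1 hf).2 hx hy ha hb hab
  simp only [smul_eq_mul] at h
  calc (a + b) * f ((a * x + b * y) / (a + b))
      = (a + b) * f (a / (a + b) * x + b / (a + b) * y) := by congr 2; field_simp
    _ ≤ (a + b) * (a / (a + b) * f x + b / (a + b) * f y) := by gcongr
    _ = a * f x + b * f y := by field_simp

lemma riemannC_neg (f : ℝ → ℝ) (n : ℕ) : riemannC (-f) n = -riemannC f n := by
  simp [riemannC, sum_neg_distrib]

lemma riemannB_neg (f : ℝ → ℝ) (n : ℕ) : riemannB (-f) n = -riemannB f n := by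
  simp [riemannB, sum_neg_distrib]

section

variable {f : ℝ → ℝ}

lemma ConvexOn.mul_apply_div_le_succ_grid (hf : ConvexOn ℝ (Set.Icc 0 1) f) {k n : ℕ}
    (hk : k ≤ n) (hn : 0 < n) :
    n * f (k / n) ≤ (n - k) * f (k / (n + 1)) + k * f ((k + 1) / (n + 1)) := by
  have h := hf.add_mul_apply_div_le (x := (k : ℝ) / ((n + 1 : ℕ) : ℝ))
    (y := ((k + 1 : ℕ) : ℝ) / ((n + 1 : ℕ) : ℝ)) (natCast_div_mem_Icc (by omega))
    (natCast_div_mem_Icc (by omega)) (sub_nonneg.2 (by exact_mod_cast hk : (k : ℝ) ≤ n))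
    k.cast_nonneg (by simpa using hn)
  have hn' : (n : ℝ) ≠ 0 := by positivity
  push_cast at h
  rwa [sub_add_cancel,
    show ((n - k) * (k / (n + 1)) + k * ((k + 1) / (n + 1))) / n = (k / n : ℝ) by
      field_simp; ring] at h

lemma ConvexOn.mul_apply_succ_div_le_grid (hf : ConvexOn ℝ (Set.Icc 0 1) f) {k n : ℕ}
    (hk : k ≤ n + 1) (hn : 0 < n) :
    (n + 1) * f (k / (n + 1)) ≤ k * f ((k - 1) / n) + (n + 1 - k) * f (k / n) := by
  have hn' : (n : ℝ) ≠ 0 := by positivity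
  -- at `k = 0` and `k = n + 1` one of the two points lies outside `[0, 1]`, but has weight `0`
  rcases k.eq_zero_or_pos with rfl | hk0
  · simp
  rcases hk.eq_or_lt with rfl | hkn
  · push_cast
    rw [div_self (by positivity), add_sub_cancel_right, div_self hn']
    simp
  have h := hf.add_mul_apply_div_le (x := ((k - 1 : ℕ) : ℝ) / n) (y := (k : ℝ) / n)
    (natCast_div_mem_Icc (by omega)) (natCast_div_mem_Icc (by omega)) k.cast_nonneg
    (sub_nonneg.2 (by exact_mod_cast hk : (k : ℝ) ≤ n + 1)) (by rw [add_sub_cancel]; positivity)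
  push_cast [Nat.cast_sub hk0] at h
  rwa [add_sub_cancel,
    show (k * ((k - 1) / n) + (n + 1 - k) * (k / n)) / (n + 1) = (k / (n + 1) : ℝ) by
      field_simp; ring] at h

lemma ConvexOn.mul_sum_Ico_le (hf : ConvexOn ℝ (Set.Icc 0 1) f) {n : ℕ} (hn : 0 < n) :
    n * ∑ k ∈ Ico 1 n, f (k / n) ≤ (n - 1) * ∑ k ∈ Ico 1 (n + 1), f (k / (n + 1)) := by
  have top : ∑ k ∈ Ico 1 n, (n - k : ℝ) * f (k / (n + 1)) =
      ∑ k ∈ Ico 1 (n + 1), (n - k : ℝ) * f (k / (n + 1)) := by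
    rw [sum_Ico_succ_top hn, sub_self, zero_mul, add_zero]
  have shift : ∑ k ∈ Ico 1 n, (k : ℝ) * f ((k + 1) / (n + 1)) =
      ∑ k ∈ Ico 1 (n + 1), (k - 1 : ℝ) * f (k / (n + 1)) := by
    rw [sum_eq_sum_Ico_succ_bot (by omega : 1 < n + 1), ← sum_Ico_add']
    simp
  calc n * ∑ k ∈ Ico 1 n, f (k / n)
      = ∑ k ∈ Ico 1 n, n * f (k / n) := mul_sum _ _ _
    _ ≤ ∑ k ∈ Ico 1 n, ((n - k) * f (k / (n + 1)) + k * f ((k + 1) / (n + 1))) :=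
      sum_le_sum fun k hk => hf.mul_apply_div_le_succ_grid (mem_Ico.1 hk).2.le hn
    _ = ∑ k ∈ Ico 1 (n + 1), ((n - k) * f (k / (n + 1)) + (k - 1) * f (k / (n + 1))) := by
      rw [sum_add_distrib, sum_add_distrib, top, shift]
    _ = (n - 1) * ∑ k ∈ Ico 1 (n + 1), f (k / (n + 1)) := by
      rw [mul_sum]
      exact sum_congr rfl fun k _ => by ring

lemma ConvexOn.mul_sum_range_succ_le (hf : ConvexOn ℝ (Set.Icc 0 1) f) {n : ℕ} (hn : 0 < n) :
    (n + 1) * ∑ k ∈ range (n + 2), f (k / (n + 1)) ≤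
      (n + 2) * ∑ k ∈ range (n + 1), f (k / n) := by
  have bot : ∑ k ∈ range (n + 2), (k : ℝ) * f ((k - 1) / n) =
      ∑ k ∈ range (n + 1), (k + 1 : ℝ) * f (k / n) := by
    rw [sum_range_succ']
    simp
  have top : ∑ k ∈ range (n + 2), (n + 1 - k : ℝ) * f (k / n) =
      ∑ k ∈ range (n + 1), (n + 1 - k : ℝ) * f (k / n) := by
    rw [sum_range_succ]
    simp
  calc (n + 1) * ∑ k ∈ range (n + 2), f (k / (n + 1))
      = ∑ k ∈ range (n + 2), (n + 1) * f (k / (n + 1)) := mul_sum _ _ _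
    _ ≤ ∑ k ∈ range (n + 2), (k * f ((k - 1) / n) + (n + 1 - k) * f (k / n)) :=
      sum_le_sum fun k hk => hf.mul_apply_succ_div_le_grid (mem_range_succ_iff.1 hk) hn
    _ = ∑ k ∈ range (n + 1), ((k + 1) * f (k / n) + (n + 1 - k) * f (k / n)) := by
      rw [sum_add_distrib, sum_add_distrib, bot, top]
    _ = (n + 2) * ∑ k ∈ range (n + 1), f (k / n) := by
      rw [mul_sum]
      exact sum_congr rfl fun k _ => by ring

theorem ConvexOn.riemannC_le_succ (hf : ConvexOn ℝ (Set.Icc 0 1) f) {n : ℕ}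
    (hn : 2 ≤ n) : riemannC f n ≤ riemannC f (n + 1) := by
  have hn' : (1 : ℝ) < n := by exact_mod_cast hn
  unfold riemannC
  push_cast
  rw [one_div_mul_eq_div, one_div_mul_eq_div, add_sub_cancel_right,
    div_le_div_iff₀ (by linarith) (by linarith), mul_comm, mul_comm _ ((n : ℝ) - 1)]
  exact hf.mul_sum_Ico_le (by omega)

theorem ConvexOn.riemannB_succ_le (hf : ConvexOn ℝ (Set.Icc 0 1) f) {n : ℕ}
    (hn : 1 ≤ n) : riemannB f (n + 1) ≤ riemannB f n := by
  unfold riemannB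
  push_cast
  rw [one_div_mul_eq_div, one_div_mul_eq_div, show (n : ℝ) + 1 + 1 = n + 2 by ring,
    div_le_div_iff₀ (by positivity) (by positivity), mul_comm, mul_comm _ ((n : ℝ) + 2)]
  exact hf.mul_sum_range_succ_le hn

theorem ConcaveOn.riemannC_succ_le (hf : ConcaveOn ℝ (Set.Icc 0 1) f) {n : ℕ}
    (hn : 2 ≤ n) : riemannC f (n + 1) ≤ riemannC f n := by
  simpa [riemannC_neg] using hf.neg.riemannC_le_succ hn

theorem ConcaveOn.riemannB_le_succ (hf : ConcaveOn ℝ (Set.Icc 0 1) f) {n : ℕ}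
    (hn : 1 ≤ n) : riemannB f n ≤ riemannB f (n + 1) := by
  simpa [riemannB_neg] using hf.neg.riemannB_succ_le hn

end

theorem stmt3 (f : ℝ → ℝ) :
    (ConvexOn ℝ (Set.Icc (0:ℝ) 1) f →
      (∀ n : ℕ, 2 ≤ n → riemannC f n ≤ riemannC f (n + 1)) ∧
      (∀ n : ℕ, 1 ≤ n → riemannB f (n + 1) ≤ riemannB f n)) ∧
    (ConcaveOn ℝ (Set.Icc (0:ℝ) 1) f →
      (∀ n : ℕ, 2 ≤ n → riemannC f (n + 1) ≤ riemannC f n) ∧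
      (∀ n : ℕ, 1 ≤ n → riemannB f n ≤ riemannB f (n + 1))) :=
  ⟨fun hf => ⟨fun _ => hf.riemannC_le_succ, fun _ => hf.riemannB_succ_le⟩,
    fun hf => ⟨fun _ => hf.riemannC_succ_le, fun _ => hf.riemannB_le_succ⟩⟩
end

section
/- Let f : [0,1] → ℝ and let c ∈ [0,1]. (1) If f is concave on [0,1] and attains its maximum value f(c) at c, then the sequence n ↦ R_n(f) − (f(c)−f(0))/n, which equals n ↦ L_n(f) − (f(c)−f(1))/n, is increasing in n. (2) If f is convex on [0,1] and attains its minimum value f(c) at c, then the sequence n ↦ R_n(f) − (f(c)−f(0))/n = L_n(f) − (f(c)−f(1))/n is decreasing in n. -/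
open Finset

/-!
With `T n = nodeSum f n = ∑_{k=0}^{n} f (k / n)` one has
`R_n f - (m - f 0) / n = (T n - m) / n = L_n f - (m - f 1) / n` for every `m`.
For convex `f`, the node `k / (n + 1)` is the convex combination of the nodes
`(k - 1) / n` and `k / n` with weights `k / (n + 1)` and `(n + 1 - k) / (n + 1)`; summing over `k`
gives `(n + 1) T (n + 1) ≤ (n + 2) T n`. Together with `T n ≥ (n + 1) m` for a lower bound `m` of
`f`, this yields `(T (n + 1) - m) / (n + 1) ≤ (T n - m) / n`. The concave case is the convex case
for `-f`.
-/

noncomputable def nodeSum (f : ℝ → ℝ) (n : ℕ) : ℝ :=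
  ∑ k ∈ range (n + 1), f (k / n)

lemma riemannR_eq_nodeSum (f : ℝ → ℝ) (n : ℕ) :
    riemannR f n = (nodeSum f n - f 0) / n := by
  have hsplit : ∑ k ∈ Icc 1 n, f ((k : ℝ) / n) + f 0 = nodeSum f n := by
    rw [nodeSum, Nat.range_succ_eq_Icc_zero, ← sum_Ioc_add_eq_sum_Icc n.zero_le]
    simp only [Nat.cast_zero, zero_div]
    rfl
  rw [riemannR, ← hsplit]
  ring

lemma riemannL_eq_nodeSum (f : ℝ → ℝ) {n : ℕ} (hn : n ≠ 0) :
    riemannL f n = (nodeSum f n - f 1) / n := by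
  rw [riemannL, nodeSum, sum_range_succ, div_self (Nat.cast_ne_zero.mpr hn)]
  ring

lemma riemannR_sub_div_eq (f : ℝ → ℝ) (n : ℕ) (m : ℝ) :
    riemannR f n - (m - f 0) / n = (nodeSum f n - m) / n := by
  rw [riemannR_eq_nodeSum]
  ring

lemma riemannL_sub_div_eq (f : ℝ → ℝ) {n : ℕ} (hn : n ≠ 0) (m : ℝ) :
    riemannL f n - (m - f 1) / n = (nodeSum f n - m) / n := by
  rw [riemannL_eq_nodeSum f hn]
  ring

lemma nodeSum_neg (f : ℝ → ℝ) (n : ℕ) : nodeSum (-f) n = -nodeSum f n := by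
  simp [nodeSum]

lemma succ_mul_le_nodeSum {f : ℝ → ℝ} {m : ℝ} (hm : ∀ x ∈ Set.Icc (0 : ℝ) 1, m ≤ f x) (n : ℕ) :
    (n + 1) * m ≤ nodeSum f n := by
  have hnodes : ∀ k ∈ range (n + 1), m ≤ f (k / n) := fun k hk ↦
    hm _ ⟨by positivity, div_le_one_of_le₀ (by exact_mod_cast Nat.lt_succ_iff.mp (mem_range.mp hk))
      n.cast_nonneg⟩
  simpa [nodeSum] using card_nsmul_le_sum _ _ _ hnodes

lemma ConvexOn.succ_mul_apply_div_succ_le {f : ℝ → ℝ} (hf : ConvexOn ℝ (Set.Icc 0 1) f)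
    {n k : ℕ} (hn : n ≠ 0) (hk : k ≤ n + 1) :
    (n + 1) * f (k / (n + 1)) ≤ k * f ((k - 1) / n) + (n + 1 - k) * f (k / n) := by
  have hn' : (0 : ℝ) < n := by positivity
  rcases Nat.eq_zero_or_pos k with rfl | hk0
  · simp
  rcases hk.eq_or_lt with rfl | hkn
  · simp [div_self hn'.ne', div_self (by positivity : (n : ℝ) + 1 ≠ 0)]
  have hk1 : (1 : ℝ) ≤ k := by exact_mod_cast hk0
  have hkn' : (k : ℝ) ≤ n := by exact_mod_cast Nat.lt_succ_iff.mp hkn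
  have hx : ((k : ℝ) - 1) / n ∈ Set.Icc (0 : ℝ) 1 :=
    ⟨div_nonneg (by linarith) hn'.le, div_le_one_of_le₀ (by linarith) hn'.le⟩
  have hy : (k : ℝ) / n ∈ Set.Icc (0 : ℝ) 1 := ⟨by positivity, div_le_one_of_le₀ hkn' hn'.le⟩
  have hconv := (convexOn_iff_div.mp hf).2 hx hy (k.cast_nonneg : (0 : ℝ) ≤ k)
    (by linarith : (0 : ℝ) ≤ n + 1 - k) (by linarith)
  have hcomb : (k : ℝ) / (n + 1) * (((k : ℝ) - 1) / n)
      + ((n : ℝ) + 1 - k) / (n + 1) * ((k : ℝ) / n) = k / (n + 1) := by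
    field_simp
    ring
  rw [add_sub_cancel, smul_eq_mul, smul_eq_mul, smul_eq_mul, smul_eq_mul, hcomb] at hconv
  calc (n + 1) * f (k / (n + 1))
      ≤ (n + 1) * (k / (n + 1) * f ((k - 1) / n) + (n + 1 - k) / (n + 1) * f (k / n)) := by
        gcongr
    _ = k * f ((k - 1) / n) + (n + 1 - k) * f (k / n) := by field_simp

lemma ConvexOn.succ_mul_nodeSum_succ_le {f : ℝ → ℝ} (hf : ConvexOn ℝ (Set.Icc 0 1) f) {n : ℕ}
    (hn : n ≠ 0) : (n + 1) * nodeSum f (n + 1) ≤ (n + 2) * nodeSum f n := by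
  calc (n + 1) * nodeSum f (n + 1) = ∑ k ∈ range (n + 2), (n + 1) * f (k / (n + 1)) := by
        rw [nodeSum, mul_sum]
        push_cast
        rfl
    _ ≤ ∑ k ∈ range (n + 2), (k * f ((k - 1) / n) + (n + 1 - k) * f (k / n)) :=
        sum_le_sum fun k hk ↦
          hf.succ_mul_apply_div_succ_le hn (Nat.lt_succ_iff.mp (mem_range.mp hk))
    _ = (n + 2) * nodeSum f n := by
        rw [sum_add_distrib, sum_range_succ' (fun k : ℕ ↦ (k : ℝ) * f ((k - 1) / n)),
          sum_range_succ (fun k : ℕ ↦ ((n : ℝ) + 1 - k) * f (k / n)), nodeSum, mul_sum]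
        push_cast
        simp only [add_sub_cancel_right, zero_mul, add_zero, sub_self,
          ← sum_add_distrib]
        refine sum_congr rfl fun k _ ↦ ?_
        ring

lemma ConvexOn.nodeSum_succ_sub_div_le {f : ℝ → ℝ} (hf : ConvexOn ℝ (Set.Icc 0 1) f) {m : ℝ}
    (hm : ∀ x ∈ Set.Icc (0 : ℝ) 1, m ≤ f x) {n : ℕ} (hn : n ≠ 0) :
    (nodeSum f (n + 1) - m) / (n + 1) ≤ (nodeSum f n - m) / n := by
  have hn' : (0 : ℝ) < n := by positivity
  rw [div_le_div_iff₀ (by positivity) hn']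
  nlinarith [hf.succ_mul_nodeSum_succ_le hn, succ_mul_le_nodeSum hm n]

lemma ConcaveOn.le_nodeSum_succ_sub_div {f : ℝ → ℝ} (hf : ConcaveOn ℝ (Set.Icc 0 1) f) {m : ℝ}
    (hm : ∀ x ∈ Set.Icc (0 : ℝ) 1, f x ≤ m) {n : ℕ} (hn : n ≠ 0) :
    (nodeSum f n - m) / n ≤ (nodeSum f (n + 1) - m) / (n + 1) := by
  have hneg := hf.neg.nodeSum_succ_sub_div_le (m := -m) (fun x hx ↦ neg_le_neg (hm x hx)) hn
  rwa [nodeSum_neg, nodeSum_neg, neg_sub_neg, neg_sub_neg, ← neg_sub (nodeSum f (n + 1)),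
    ← neg_sub (nodeSum f n), neg_div, neg_div, neg_le_neg_iff] at hneg

theorem stmt6_general (f : ℝ → ℝ) (c : ℝ) :
    ((ConcaveOn ℝ (Set.Icc (0:ℝ) 1) f ∧ ∀ x ∈ Set.Icc (0:ℝ) 1, f x ≤ f c) →
      (∀ n : ℕ, 1 ≤ n →
        riemannR f n - (f c - f 0) / (n : ℝ) = riemannL f n - (f c - f 1) / (n : ℝ)) ∧
      (∀ n : ℕ, 1 ≤ n →
        riemannR f n - (f c - f 0) / (n : ℝ) ≤
          riemannR f (n + 1) - (f c - f 0) / ((n : ℝ) + 1))) ∧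
    ((ConvexOn ℝ (Set.Icc (0:ℝ) 1) f ∧ ∀ x ∈ Set.Icc (0:ℝ) 1, f c ≤ f x) →
      (∀ n : ℕ, 1 ≤ n →
        riemannR f n - (f c - f 0) / (n : ℝ) = riemannL f n - (f c - f 1) / (n : ℝ)) ∧
      (∀ n : ℕ, 1 ≤ n →
        riemannR f (n + 1) - (f c - f 0) / ((n : ℝ) + 1) ≤
          riemannR f n - (f c - f 0) / (n : ℝ))) := by
  have hRL (n : ℕ) (hn : 1 ≤ n) :
      riemannR f n - (f c - f 0) / n = riemannL f n - (f c - f 1) / n := by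
    rw [riemannR_sub_div_eq, riemannL_sub_div_eq f (by omega)]
  have hsucc (n : ℕ) :
      riemannR f (n + 1) - (f c - f 0) / ((n : ℝ) + 1) = (nodeSum f (n + 1) - f c) / (n + 1) := by
    exact_mod_cast riemannR_sub_div_eq f (n + 1) (f c)
  refine ⟨fun ⟨hf, hmax⟩ ↦ ⟨hRL, fun n hn ↦ ?_⟩, fun ⟨hf, hmin⟩ ↦ ⟨hRL, fun n hn ↦ ?_⟩⟩
  · rw [riemannR_sub_div_eq, hsucc]
    exact hf.le_nodeSum_succ_sub_div hmax (by omega)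
  · rw [riemannR_sub_div_eq, hsucc]
    exact hf.nodeSum_succ_sub_div_le hmin (by omega)

theorem stmt6 (f : ℝ → ℝ) (c : ℝ) (hc : c ∈ Set.Icc (0:ℝ) 1) :
    ((ConcaveOn ℝ (Set.Icc (0:ℝ) 1) f ∧ ∀ x ∈ Set.Icc (0:ℝ) 1, f x ≤ f c) →
      (∀ n : ℕ, 1 ≤ n →
        riemannR f n - (f c - f 0) / (n : ℝ) = riemannL f n - (f c - f 1) / (n : ℝ)) ∧
      (∀ n : ℕ, 1 ≤ n →
        riemannR f n - (f c - f 0) / (n : ℝ) ≤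
          riemannR f (n + 1) - (f c - f 0) / ((n : ℝ) + 1))) ∧
    ((ConvexOn ℝ (Set.Icc (0:ℝ) 1) f ∧ ∀ x ∈ Set.Icc (0:ℝ) 1, f c ≤ f x) →
      (∀ n : ℕ, 1 ≤ n →
        riemannR f n - (f c - f 0) / (n : ℝ) = riemannL f n - (f c - f 1) / (n : ℝ)) ∧
      (∀ n : ℕ, 1 ≤ n →
        riemannR f (n + 1) - (f c - f 0) / ((n : ℝ) + 1) ≤
          riemannR f n - (f c - f 0) / (n : ℝ))) :=
  stmt6_general f c
end

section
/- Let f : [0,1] → ℝ be symmetric with respect to x = 1/2, i.e. f(x) = f(1−x) for all x ∈ [0,1], and define the symmetric Riemann sum λ_n(f) := (1/n) ∑_{k=0}^{n} f(k/n) − f(1/2)/n for n ≥ 1. (1) If f is concave on [0,1], then λ_n(f) is increasing in n. (2) If f is convex on [0,1], then λ_n(f) is decreasing in n. -/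
open Finset

/-- Symmetric Riemann sum `λ_n(f) = (1/n) ∑_{k=0}^{n} f (k/n) - f(1/2)/n`. -/
noncomputable def riemannSym (f : ℝ → ℝ) (n : ℕ) : ℝ :=
  (1 / (n : ℝ)) * ∑ k ∈ Finset.range (n + 1), f ((k : ℝ) / (n : ℝ)) - f (1 / 2) / (n : ℝ)

/-!
Write `S_n = ∑_{k=0}^{n} f (k/n)`, so that `λ_n = (S_n - f(1/2)) / n`. For concave `f`, the point
`(j+1)/(n+1)` is the convex combination of `j/n` and `(j+1)/n` with weights `(j+1)/(n+1)` and
`(n-j)/(n+1)`; summing the resulting concavity inequalities over `j < n` gives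
`(n+2) S_n ≤ (n+1) S_{n+1}`, i.e. the sample means `S_n/(n+1)` increase. Symmetry and concavity
make `f(1/2)` the maximum of `f` on `[0,1]`, so `S_n ≤ (n+1) f(1/2)`, and these two inequalities
combine to `λ_n ≤ λ_{n+1}`. The convex case follows by applying this to `-f`.
-/

theorem sum_range_weighted_consecutive (g : ℕ → ℝ) (n : ℕ) :
    ∑ j ∈ range n, (((j : ℝ) + 1) * g j + ((n : ℝ) - j) * g (j + 1)) + ((n : ℝ) + 1) * (g 0 + g n)
      = ((n : ℝ) + 2) * ∑ k ∈ range (n + 1), g k := by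
  have hup : ∑ k ∈ range (n + 1), ((k : ℝ) + 1) * g k
      = ∑ j ∈ range n, ((j : ℝ) + 1) * g j + ((n : ℝ) + 1) * g n :=
    sum_range_succ _ _
  have hdown : ∑ k ∈ range (n + 1), ((n : ℝ) + 1 - k) * g k
      = ∑ j ∈ range n, ((n : ℝ) - j) * g (j + 1) + ((n : ℝ) + 1) * g 0 := by
    rw [sum_range_succ']
    push_cast
    exact congrArg₂ (· + ·) (sum_congr rfl fun j _ => by ring) (by ring)
  calc _ = ∑ k ∈ range (n + 1), ((k : ℝ) + 1) * g k
        + ∑ k ∈ range (n + 1), ((n : ℝ) + 1 - k) * g k := by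
        rw [hup, hdown, sum_add_distrib]; ring
    _ = _ := by
        rw [← sum_add_distrib, mul_sum]
        exact sum_congr rfl fun k _ => by ring

namespace ConcaveOn

variable {f : ℝ → ℝ}

theorem le_apply_one_half_of_symm (hf : ConcaveOn ℝ (Set.Icc 0 1) f)
    (hsym : ∀ x ∈ Set.Icc (0 : ℝ) 1, f x = f (1 - x)) {x : ℝ} (hx : x ∈ Set.Icc (0 : ℝ) 1) :
    f x ≤ f (1 / 2) := by
  have hx' : 1 - x ∈ Set.Icc (0 : ℝ) 1 := ⟨by linarith [hx.2], by linarith [hx.1]⟩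
  have hhalf : (1 / 2 : ℝ) ∈ segment ℝ x (1 - x) := by
    rw [segment_eq_uIcc, Set.mem_uIcc]
    rcases le_total x (1 / 2) with h | h
    · exact Or.inl ⟨h, by linarith⟩
    · exact Or.inr ⟨by linarith, h⟩
  simpa [← hsym x hx] using hf.min_le_of_mem_segment hx hx' hhalf

theorem mul_apply_add_mul_apply_le (hf : ConcaveOn ℝ (Set.Icc 0 1) f) {n j : ℕ} (hj : j < n) :
    ((j : ℝ) + 1) * f (j / n) + ((n : ℝ) - j) * f ((j + 1 : ℕ) / n)
      ≤ ((n : ℝ) + 1) * f ((j + 1 : ℕ) / (n + 1 : ℕ)) := by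
  push_cast
  have hjn : (j : ℝ) + 1 ≤ n := by exact_mod_cast hj
  have hn : (0 : ℝ) < n := by linarith [(j.cast_nonneg : (0 : ℝ) ≤ j)]
  have hmem : ∀ i : ℝ, 0 ≤ i → i ≤ n → i / n ∈ Set.Icc (0 : ℝ) 1 := fun i h0 h1 =>
    ⟨by positivity, (div_le_one hn).2 h1⟩
  have ha : (0 : ℝ) ≤ (j + 1) / (n + 1) := by positivity
  have hb : (0 : ℝ) ≤ (n - j) / (n + 1) := div_nonneg (by linarith) (by positivity)
  have hcomb := hf.2 (hmem j j.cast_nonneg (by linarith)) (hmem (j + 1) (by positivity) hjn)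
    ha hb (by field_simp; ring)
  have hpoint : (((j : ℝ) + 1) / (n + 1)) • ((j : ℝ) / n)
      + (((n : ℝ) - j) / (n + 1)) • ((j + 1) / n) = (j + 1) / (n + 1) := by
    simp only [smul_eq_mul]; field_simp; ring
  rw [hpoint, smul_eq_mul, smul_eq_mul] at hcomb
  calc _ = (n + 1) * ((j + 1) / (n + 1) * f (j / n) + (n - j) / (n + 1) * f ((j + 1) / n)) := by
        field_simp
    _ ≤ _ := by gcongr

theorem add_two_mul_sum_le_add_one_mul_sum (hf : ConcaveOn ℝ (Set.Icc 0 1) f) {n : ℕ}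
    (hn : 0 < n) :
    ((n : ℝ) + 2) * ∑ k ∈ range (n + 1), f (k / n)
      ≤ ((n : ℝ) + 1) * ∑ k ∈ range (n + 2), f (k / (n + 1 : ℕ)) := by
  have hn0 : (n : ℝ) ≠ 0 := by positivity
  calc _ = ∑ j ∈ range n, (((j : ℝ) + 1) * f (j / n) + ((n : ℝ) - j) * f ((j + 1 : ℕ) / n))
        + ((n : ℝ) + 1) * (f 0 + f 1) := by
        rw [← sum_range_weighted_consecutive (fun k : ℕ => f (k / n)), div_self hn0]
        simp
    _ ≤ ∑ j ∈ range n, ((n : ℝ) + 1) * f ((j + 1 : ℕ) / (n + 1 : ℕ))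
        + ((n : ℝ) + 1) * (f 0 + f 1) := by
        gcongr with j hj
        exact hf.mul_apply_add_mul_apply_le (mem_range.1 hj)
    _ = _ := by
        rw [sum_range_succ, sum_range_succ', ← mul_sum, div_self (by positivity)]
        simp only [CharP.cast_eq_zero, zero_div]
        ring

end ConcaveOn

theorem riemannSym_eq_div (f : ℝ → ℝ) (n : ℕ) :
    riemannSym f n = (∑ k ∈ range (n + 1), f (k / n) - f (1 / 2)) / n := by
  rw [riemannSym]; ring

theorem riemannSym_neg (f : ℝ → ℝ) (n : ℕ) : riemannSym (-f) n = -riemannSym f n := by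
  simp only [riemannSym, Pi.neg_apply, sum_neg_distrib]; ring

theorem riemannSym_le_succ_of_concaveOn {f : ℝ → ℝ} (hf : ConcaveOn ℝ (Set.Icc 0 1) f)
    (hsym : ∀ x ∈ Set.Icc (0 : ℝ) 1, f x = f (1 - x)) {n : ℕ} (hn : 0 < n) :
    riemannSym f n ≤ riemannSym f (n + 1) := by
  have hn' : (0 : ℝ) < n := by exact_mod_cast hn
  have hstep := hf.add_two_mul_sum_le_add_one_mul_sum hn
  have hmax : ∑ k ∈ range (n + 1), f (k / n) ≤ ((n : ℝ) + 1) * f (1 / 2) := by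
    refine (sum_le_card_nsmul _ _ _ fun k hk => hf.le_apply_one_half_of_symm hsym ?_).trans ?_
    · have hk : (k : ℝ) ≤ n := by exact_mod_cast Nat.lt_succ_iff.1 (mem_range.1 hk)
      exact ⟨by positivity, (div_le_one hn').2 hk⟩
    · simp
  rw [riemannSym_eq_div, riemannSym_eq_div, div_le_div_iff₀ hn' (by positivity)]
  push_cast at hstep ⊢
  nlinarith [mul_le_mul_of_nonneg_left hstep hn'.le]

theorem stmt7 (f : ℝ → ℝ)
    (hsym : ∀ x ∈ Set.Icc (0:ℝ) 1, f x = f (1 - x)) :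
    (ConcaveOn ℝ (Set.Icc (0:ℝ) 1) f →
      ∀ n : ℕ, 1 ≤ n → riemannSym f n ≤ riemannSym f (n + 1)) ∧
    (ConvexOn ℝ (Set.Icc (0:ℝ) 1) f →
      ∀ n : ℕ, 1 ≤ n → riemannSym f (n + 1) ≤ riemannSym f n) := by
  refine ⟨fun hf n hn => riemannSym_le_succ_of_concaveOn hf hsym hn, fun hf n hn => ?_⟩
  have hsym_neg : ∀ x ∈ Set.Icc (0 : ℝ) 1, (-f) x = (-f) (1 - x) := fun x hx => by
    simp [hsym x hx]
  have h := riemannSym_le_succ_of_concaveOn hf.neg hsym_neg hn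
  rwa [riemannSym_neg, riemannSym_neg, neg_le_neg_iff] at h
end

section
/- Fix an integer n ≥ 1 and set N := n(n+1). Define x_j := ⌈j/(n+1)⌉/n and y_j := ⌈j/n⌉/(n+1) for j = 1, …, N (so x consists of each value 1/n, 2/n, …, 1 repeated n+1 times in increasing order, and y consists of each value 1/(n+1), …, 1 repeated n times in increasing order). Then for every 1 ≤ k ≤ N, ∑_{j=1}^{k} x_j ≥ ∑_{j=1}^{k} y_j; in other words, the vector x is weakly supermajorized by the vector y. -/
open Finset

lemma ceil_nat_div (j m : ℕ) (hm : 1 ≤ m) :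
    ⌈(j:ℝ)/(m:ℝ)⌉ = ((j + m - 1)/m : ℕ) := by
  have hm0 : (0:ℝ) < m := by exact_mod_cast hm
  have h3 := Nat.div_add_mod (j + m - 1) m
  have h4 := Nat.mod_lt (j + m - 1) (show 0 < m by omega)
  have h5 : j ≤ m * ((j + m - 1)/m) := by omega
  have h6 : m * ((j + m - 1)/m) < j + m := by omega
  rw [Int.ceil_eq_iff, Int.cast_natCast]
  have h6' : (m:ℝ) * ((j + m - 1)/m : ℕ) < j + m := by exact_mod_cast h6
  have h5' : (j:ℝ) ≤ m * ((j + m - 1)/m : ℕ) := by exact_mod_cast h5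
  constructor
  · rw [lt_div_iff₀ hm0]; nlinarith
  · rw [div_le_iff₀ hm0]; nlinarith

lemma sum_ceil_div (m : ℕ) (hm : 1 ≤ m) (k : ℕ) :
    2 * ∑ j ∈ Icc 1 k, ((j + m - 1)/m) =
      m * (k/m) * (k/m + 1) + 2 * (k % m) * (k/m + 1) := by
  induction k with
  | zero => simp
  | succ k IH =>
    rw [Finset.sum_Icc_succ_top (by omega : 1 ≤ k + 1), mul_add]
    have hterm : (k + 1 + m - 1) = k + m := by omega
    rw [hterm, Nat.add_div_right k (by omega : 0 < m)]
    have hdm := Nat.div_add_mod k m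
    have hmod := Nat.mod_lt k (show 0 < m by omega)
    rcases Nat.lt_or_ge (k % m + 1) m with h | h
    · obtain ⟨hd, hmo⟩ := (Nat.div_mod_unique (show 0 < m by omega)).2
        (⟨by omega, h⟩ : (k % m + 1) + m * (k / m) = k + 1 ∧ k % m + 1 < m)
      rw [hd, hmo]
      zify at IH ⊢
      linear_combination IH
    · have hexp : m * (k/m + 1) = m * (k/m) + m := by ring
      obtain ⟨hd, hmo⟩ := (Nat.div_mod_unique (show 0 < m by omega)).2
        (⟨by omega, by omega⟩ : 0 + m * (k / m + 1) = k + 1 ∧ 0 < m)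
      rw [hd, hmo]
      have hr' : (k:ℤ) % (m:ℤ) = (m:ℤ) - 1 := by omega
      zify at IH ⊢
      linear_combination IH + 2*((k:ℤ)/(m:ℤ) + 1)*hr'

lemma key_ineq (n k q r s t : ℤ) (hn : 1 ≤ n) (hk1 : 1 ≤ k) (hk2 : k ≤ n*(n+1))
    (h1 : (n+1)*q + r = k) (hr0 : 0 ≤ r) (hr : r ≤ n)
    (h2 : n*s + t = k) (ht0 : 0 ≤ t) (ht : t ≤ n-1) (hq0 : 0 ≤ q) (hs0 : 0 ≤ s) :
    n*(n*s*(s+1)+2*t*(s+1)) ≤ (n+1)*((n+1)*q*(q+1)+2*r*(q+1)) := by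
  have hq : q ≤ n := by nlinarith
  have hd : n * (s - q) = q + r - t := by linarith
  have hd0 : 0 ≤ s - q := by nlinarith
  have hd2 : s - q ≤ 1 := by
    by_contra hcon
    push_neg at hcon
    nlinarith
  interval_cases h : s - q
  · have hs' : s = q := by omega
    subst hs'
    nlinarith
  · have hs' : s = q + 1 := by omega
    subst hs'
    have ht' : t = q + r - n := by linarith
    subst ht'
    nlinarith [mul_nonneg (sub_nonneg.2 hq) hq0, mul_nonneg (sub_nonneg.2 hr) (sub_nonneg.2 hq),
      mul_nonneg ht0 (by linarith : (0:ℤ) ≤ q + 1), mul_nonneg ht0 (sub_nonneg.2 hq),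
      mul_nonneg (sub_nonneg.2 hr) hq0]

theorem stmt9 (n : ℕ) (hn : 1 ≤ n) (x y : ℕ → ℝ)
    (hx : ∀ j : ℕ, x j = (⌈(j : ℝ) / ((n : ℝ) + 1)⌉ : ℝ) / (n : ℝ))
    (hy : ∀ j : ℕ, y j = (⌈(j : ℝ) / (n : ℝ)⌉ : ℝ) / ((n : ℝ) + 1)) :
    ∀ k : ℕ, 1 ≤ k → k ≤ n * (n + 1) →
      ∑ j ∈ Finset.Icc 1 k, y j ≤ ∑ j ∈ Finset.Icc 1 k, x j := by
  intro k hk1 hk2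
  set A : ℕ := ∑ j ∈ Icc 1 k, ((j + (n+1) - 1)/(n+1)) with hA
  set B : ℕ := ∑ j ∈ Icc 1 k, ((j + n - 1)/n) with hB
  have hn0 : (0:ℝ) < n := by exact_mod_cast hn
  have hn1 : (0:ℝ) < (n:ℝ) + 1 := by positivity
  have hxs : ∑ j ∈ Icc 1 k, x j = (A:ℝ)/n := by
    have hc : ∀ j ∈ Icc 1 k, x j = (((j + (n+1) - 1)/(n+1) : ℕ) : ℝ)/n := by
      intro j _
      rw [hx j]
      have hcast : ((n:ℝ)) + 1 = ((n+1 : ℕ):ℝ) := by push_cast; ring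
      rw [hcast, ceil_nat_div j (n+1) (by omega)]
      rw [Int.cast_natCast]
    rw [Finset.sum_congr rfl hc, ← Finset.sum_div, hA]
    norm_cast
  have hys : ∑ j ∈ Icc 1 k, y j = (B:ℝ)/((n:ℝ)+1) := by
    have hc : ∀ j ∈ Icc 1 k, y j = (((j + n - 1)/n : ℕ) : ℝ)/((n:ℝ)+1) := by
      intro j _
      rw [hy j]
      rw [ceil_nat_div j n hn]
      rw [Int.cast_natCast]
    rw [Finset.sum_congr rfl hc, ← Finset.sum_div, hB]
    norm_cast
  rw [hxs, hys, div_le_div_iff₀ hn1 hn0]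
  have hA2 := sum_ceil_div (n+1) (by omega) k
  have hB2 := sum_ceil_div n hn k
  rw [← hA] at hA2
  rw [← hB] at hB2
  have key := key_ineq (n:ℤ) (k:ℤ) (k/(n+1) : ℕ) (k%(n+1) : ℕ) (k/n : ℕ) (k%n : ℕ)
    (by exact_mod_cast hn) (by exact_mod_cast hk1)
    (by exact_mod_cast hk2)
    (by exact_mod_cast Nat.div_add_mod k (n+1)) (by positivity)
    (by have := Nat.mod_lt k (show 0 < n+1 by omega); exact_mod_cast Nat.lt_succ_iff.mp this)
    (by exact_mod_cast Nat.div_add_mod k n) (by positivity)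
    (by have := Nat.mod_lt k (show 0 < n by omega); omega)
    (by positivity) (by positivity)
  have hA2' : 2 * (A:ℤ) = ((n:ℤ)+1) * (k/(n+1) : ℕ) * ((k/(n+1) : ℕ) + 1)
      + 2 * (k%(n+1) : ℕ) * ((k/(n+1) : ℕ) + 1) := by exact_mod_cast congrArg (Nat.cast : ℕ → ℤ) hA2
  have hB2' : 2 * (B:ℤ) = (n:ℤ) * (k/n : ℕ) * ((k/n : ℕ) + 1)
      + 2 * (k%n : ℕ) * ((k/n : ℕ) + 1) := by exact_mod_cast congrArg (Nat.cast : ℕ → ℤ) hB2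
  have hfin : (n:ℤ) * (2 * B) ≤ ((n:ℤ)+1) * (2 * A) := by
    rw [hA2', hB2']
    exact key
  have hfinR : (n:ℝ) * B ≤ ((n:ℝ)+1) * A := by
    have : ((n:ℤ) * (2 * B) : ℤ) ≤ (((n:ℤ)+1) * (2 * A) : ℤ) := hfin
    have h2 : (n:ℝ) * (2 * B) ≤ ((n:ℝ)+1) * (2 * A) := by exact_mod_cast this
    linarith
  linarith
end

section
/- Let f : [0,1] → ℝ be monotonic (increasing or decreasing) on [0,1]. If the sequence R_n(f) is constant in n, or if the sequence L_n(f) is constant in n, then f is constant on the open interval (0,1) (i.e. f is constant except possibly at x = 0 or x = 1). -/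
open Finset

lemma riemannR_one (f : ℝ → ℝ) : riemannR f 1 = f 1 := by
  simp [riemannR]

lemma riemannL_one (f : ℝ → ℝ) : riemannL f 1 = f 0 := by
  simp [riemannL]

lemma riemannR_neg (f : ℝ → ℝ) (n : ℕ) :
    riemannR (fun x => -f x) n = - riemannR f n := by
  simp [riemannR, Finset.sum_neg_distrib]

lemma riemannL_neg (f : ℝ → ℝ) (n : ℕ) :
    riemannL (fun x => -f x) n = - riemannL f n := by
  simp [riemannL, Finset.sum_neg_distrib]

lemma keyR (f : ℝ → ℝ) (hm : MonotoneOn f (Set.Icc (0:ℝ) 1))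
    (hc : ∀ n : ℕ, 1 ≤ n → riemannR f n = riemannR f 1) :
    ∀ x ∈ Set.Ioo (0:ℝ) 1, f x = f 1 := by
  intro x hx
  obtain ⟨hx0, hx1⟩ := hx
  set n : ℕ := ⌈1/x⌉₊ with hn
  have hn1 : 1 ≤ n := Nat.ceil_pos.mpr (by positivity)
  have hnR : (1:ℝ) ≤ n := by exact_mod_cast hn1
  have hnpos : (0:ℝ) < n := by linarith
  have hceil : 1/x ≤ (n:ℝ) := Nat.le_ceil _
  have hnx : 1/(n:ℝ) ≤ x := by
    rw [div_le_iff₀ hnpos]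
    rw [div_le_iff₀ hx0] at hceil
    linarith [mul_comm x (n:ℝ)]
  -- each term ≤ f 1
  have hmem : ∀ k ∈ Finset.Icc 1 n, ((k:ℝ)/n) ∈ Set.Icc (0:ℝ) 1 := by
    intro k hk
    rw [Finset.mem_Icc] at hk
    constructor
    · positivity
    · rw [div_le_one hnpos]; exact_mod_cast hk.2
  have hterm : ∀ k ∈ Finset.Icc 1 n, f ((k:ℝ)/n) ≤ f 1 := by
    intro k hk
    exact hm (hmem k hk) (by norm_num) ((div_le_one hnpos).mpr
      (by exact_mod_cast (Finset.mem_Icc.mp hk).2))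
  have hsum : ∑ k ∈ Finset.Icc 1 n, f ((k:ℝ)/n) = n * f 1 := by
    have := hc n hn1
    rw [riemannR_one, riemannR] at this
    field_simp at this
    linarith [this]
  have heach : ∀ k ∈ Finset.Icc 1 n, f ((k:ℝ)/n) = f 1 := by
    by_contra h
    push_neg at h
    obtain ⟨k, hk, hne⟩ := h
    have hlt : f ((k:ℝ)/n) < f 1 := lt_of_le_of_ne (hterm k hk) hne
    have : ∑ k ∈ Finset.Icc 1 n, f ((k:ℝ)/n) < ∑ _k ∈ Finset.Icc 1 n, f 1 :=
      Finset.sum_lt_sum hterm ⟨k, hk, hlt⟩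
    rw [Finset.sum_const, Nat.card_Icc] at this
    simp only [Nat.add_sub_cancel, nsmul_eq_mul] at this
    linarith [hsum]
  have h1 : f (1/(n:ℝ)) = f 1 := by
    have := heach 1 (Finset.mem_Icc.mpr ⟨le_refl 1, hn1⟩)
    simpa using this
  have hxmem : x ∈ Set.Icc (0:ℝ) 1 := ⟨hx0.le, hx1.le⟩
  have hinvmem : (1/(n:ℝ)) ∈ Set.Icc (0:ℝ) 1 := ⟨by positivity, by
    rw [div_le_one hnpos]; exact hnR⟩
  have h2 : f (1/(n:ℝ)) ≤ f x := hm hinvmem hxmem hnx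
  have h3 : f x ≤ f 1 := hm hxmem (by norm_num) hx1.le
  linarith

lemma keyL (f : ℝ → ℝ) (hm : MonotoneOn f (Set.Icc (0:ℝ) 1))
    (hc : ∀ n : ℕ, 1 ≤ n → riemannL f n = riemannL f 1) :
    ∀ x ∈ Set.Ioo (0:ℝ) 1, f x = f 0 := by
  intro x hx
  obtain ⟨hx0, hx1⟩ := hx
  have h1x : (0:ℝ) < 1 - x := by linarith
  set n : ℕ := ⌈1/(1-x)⌉₊ with hn
  have hn1 : 1 ≤ n := Nat.ceil_pos.mpr (by positivity)
  have hnR : (1:ℝ) ≤ n := by exact_mod_cast hn1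
  have hnpos : (0:ℝ) < n := by linarith
  have hceil : 1/(1-x) ≤ (n:ℝ) := Nat.le_ceil _
  have hnx : x ≤ ((n:ℝ)-1)/n := by
    rw [le_div_iff₀ hnpos]
    rw [div_le_iff₀ h1x] at hceil
    nlinarith
  have hmem : ∀ k ∈ Finset.range n, ((k:ℝ)/n) ∈ Set.Icc (0:ℝ) 1 := by
    intro k hk
    rw [Finset.mem_range] at hk
    constructor
    · positivity
    · rw [div_le_one hnpos]; exact_mod_cast hk.le
  have hterm : ∀ k ∈ Finset.range n, f 0 ≤ f ((k:ℝ)/n) := by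
    intro k hk
    exact hm (by norm_num) (hmem k hk) (by positivity)
  have hsum : ∑ k ∈ Finset.range n, f ((k:ℝ)/n) = n * f 0 := by
    have := hc n hn1
    rw [riemannL_one, riemannL] at this
    field_simp at this
    linarith [this]
  have heach : ∀ k ∈ Finset.range n, f ((k:ℝ)/n) = f 0 := by
    by_contra h
    push_neg at h
    obtain ⟨k, hk, hne⟩ := h
    have hlt : f 0 < f ((k:ℝ)/n) := lt_of_le_of_ne (hterm k hk) (Ne.symm hne)
    have : ∑ _k ∈ Finset.range n, f 0 < ∑ k ∈ Finset.range n, f ((k:ℝ)/n) :=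
      Finset.sum_lt_sum hterm ⟨k, hk, hlt⟩
    rw [Finset.sum_const, Finset.card_range, nsmul_eq_mul] at this
    linarith [hsum]
  have h1 : f (((n:ℝ)-1)/n) = f 0 := by
    have := heach (n-1) (Finset.mem_range.mpr (by omega))
    have hcast : (((n-1 : ℕ)):ℝ) = (n:ℝ) - 1 := by
      push_cast [Nat.cast_sub hn1]; ring
    rwa [hcast] at this
  have hxmem : x ∈ Set.Icc (0:ℝ) 1 := ⟨hx0.le, hx1.le⟩
  have hmem2 : (((n:ℝ)-1)/n) ∈ Set.Icc (0:ℝ) 1 := ⟨by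
      apply div_nonneg; linarith; linarith, by
      rw [div_le_one hnpos]; linarith⟩
  have h2 : f x ≤ f (((n:ℝ)-1)/n) := hm hxmem hmem2 hnx
  have h3 : f 0 ≤ f x := hm (by norm_num) hxmem hx0.le
  linarith

theorem stmt15 (f : ℝ → ℝ)
    (hmono : MonotoneOn f (Set.Icc (0:ℝ) 1) ∨ AntitoneOn f (Set.Icc (0:ℝ) 1))
    (hconst : (∀ n m : ℕ, 1 ≤ n → 1 ≤ m → riemannR f n = riemannR f m) ∨
              (∀ n m : ℕ, 1 ≤ n → 1 ≤ m → riemannL f n = riemannL f m)) :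
    ∀ x ∈ Set.Ioo (0:ℝ) 1, ∀ y ∈ Set.Ioo (0:ℝ) 1, f x = f y := by
  intro x hx y hy
  rcases hmono with hm | hm
  · rcases hconst with hc | hc
    · have hc' : ∀ n : ℕ, 1 ≤ n → riemannR f n = riemannR f 1 :=
        fun n hn => hc n 1 hn le_rfl
      rw [keyR f hm hc' x hx, keyR f hm hc' y hy]
    · have hc' : ∀ n : ℕ, 1 ≤ n → riemannL f n = riemannL f 1 :=
        fun n hn => hc n 1 hn le_rfl
      rw [keyL f hm hc' x hx, keyL f hm hc' y hy]
  · have hm' : MonotoneOn (fun x => -f x) (Set.Icc (0:ℝ) 1) :=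
      fun a ha b hb hab => neg_le_neg (hm ha hb hab)
    rcases hconst with hc | hc
    · have hc' : ∀ n : ℕ, 1 ≤ n → riemannR (fun x => -f x) n = riemannR (fun x => -f x) 1 := by
        intro n hn
        rw [riemannR_neg, riemannR_neg, hc n 1 hn le_rfl]
      have h1 := keyR (fun x => -f x) hm' hc' x hx
      have h2 := keyR (fun x => -f x) hm' hc' y hy
      linarith
    · have hc' : ∀ n : ℕ, 1 ≤ n → riemannL (fun x => -f x) n = riemannL (fun x => -f x) 1 := by
        intro n hn
        rw [riemannL_neg, riemannL_neg, hc n 1 hn le_rfl]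
      have h1 := keyL (fun x => -f x) hm' hc' x hx
      have h2 := keyL (fun x => -f x) hm' hc' y hy
      linarith
end
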